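/- arXiv:0903.4624 — 6 statements merged into one kernel-verified Lean document; each statement's English description precedes it below -/
import Mathlib

section
/- Suppose M is a differentiable N-function and 1 ≤ d ≤ D are constants with d·M(r)/r ≤ M'(r) ≤ D·M(r)/r for every r > 0. Then for every r, s > 0 the estimate (M(r)/r)·s ≤ ((D−1)/d)·M(r) + (1/d)·M(s) holds. -/
open Real MeasureTheory Filter Set

theorem hardy_orlicz_lemma_young
    (M M' : ℝ → ℝ) (d D : ℝ)
    (hconv : ConvexOn ℝ (Set.Ici 0) M)
    (hcont : ContinuousOn M (Set.Ici 0))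
    (hM0 : M 0 = 0)
    (hlim0 : Filter.Tendsto (fun t => M t / t) (nhdsWithin 0 (Set.Ioi 0)) (nhds 0))
    (hliminf : Filter.Tendsto (fun t => M t / t) Filter.atTop Filter.atTop)
    (hderiv : ∀ r > 0, HasDerivAt M (M' r) r)
    (hd : 1 ≤ d) (hdD : d ≤ D)
    (hidx : ∀ r > 0, d * M r / r ≤ M' r ∧ M' r ≤ D * M r / r) :
    ∀ r > 0, ∀ s > (0 : ℝ),
      M r / r * s ≤ (D - 1) / d * M r + 1 / d * M s := by
  intro r hr s hs
  have hrS : r ∈ Set.Ici (0:ℝ) := le_of_lt hr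
  have hsS : s ∈ Set.Ici (0:ℝ) := le_of_lt hs
  have hd0 : (0:ℝ) < d := lt_of_lt_of_le one_pos hd
  have hlo := (hidx r hr).1
  have hhi := (hidx r hr).2
  -- supporting line: M' r * (s - r) ≤ M s - M r
  have key : M' r * (s - r) ≤ M s - M r := by
    rcases lt_trichotomy r s with h | h | h
    · have := hconv.le_slope_of_hasDerivAt hrS hsS h (hderiv r hr)
      rw [slope_def_field] at this
      have hne : s - r > 0 := by linarith
      calc M' r * (s - r) ≤ (M s - M r) / (s - r) * (s - r) := by
            exact mul_le_mul_of_nonneg_right this hne.le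
        _ = M s - M r := by field_simp
    · simp [h]
    · have := hconv.slope_le_of_hasDerivAt hsS hrS h (hderiv r hr)
      rw [slope_def_field] at this
      have hne : r - s > 0 := by linarith
      have h2 : M r - M s ≤ M' r * (r - s) := by
        calc M r - M s = (M r - M s) / (r - s) * (r - s) := by field_simp
          _ ≤ M' r * (r - s) := mul_le_mul_of_nonneg_right this hne.le
      nlinarith
  have h1 : d * (M r / r) * s ≤ M' r * s := by
    have : d * M r / r * s ≤ M' r * s := mul_le_mul_of_nonneg_right hlo hs.le
    calc d * (M r / r) * s = d * M r / r * s := by ring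
      _ ≤ M' r * s := this
  have h2 : M' r * r ≤ D * M r := by
    have := mul_le_mul_of_nonneg_right hhi hr.le
    rwa [div_mul_cancel₀ _ hr.ne'] at this
  have h3 : d * (M r / r * s) ≤ M s + (D - 1) * M r := by nlinarith
  have h4 : d * (M r / r * s) ≤ d * ((D - 1) / d * M r + 1 / d * M s) := by
    have he : d * ((D - 1) / d * M r + 1 / d * M s) = (D - 1) * M r + M s := by
      field_simp
    rw [he]; linarith
  exact le_of_mul_le_mul_left h4 hd0
end

section
/- Let M be a differentiable N-function satisfying d·M(r)/r ≤ M'(r) ≤ D·M(r)/r for all r > 0 with 1 ≤ d ≤ D, let φ ∈ C²(ℝ₊) with φ'(r) < 0 for all r > 0, φ'(R) → 0 as R → ∞, and let ω ≥ 0 be C¹ with L := sup_{r>0} ω(r)/|φ'(r)| < ∞. If u ∈ W^{1,1}_{loc}(ℝ₊) is such that u(R) and u(R)e^{−φ(R)} are bounded near ∞, then h^u(R)e^{−φ(R)} → 0 as R → ∞, where h^u(r) = M(ω(r)|u(r)|)/φ'(r); consequently u belongs to the class R⁺, i.e. there exist sequences s_n → 0, R_n → ∞ with lim_n (h^u(R_n)e^{−φ(R_n)}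 − h^u(s_n)e^{−φ(s_n)}) ≥ 0. -/
open Real MeasureTheory Filter Set ENNReal

theorem membership_Rplus_of_boundedness
    (M M' : ℝ → ℝ) (d D : ℝ)
    (φ φ' φ'' ω ω' u u' : ℝ → ℝ) (L : ℝ)
    -- M is a differentiable N-function with two-sided index bounds
    (hconv : ConvexOn ℝ (Set.Ici 0) M)
    (hcont : ContinuousOn M (Set.Ici 0))
    (hM0 : M 0 = 0)
    (hlim0 : Filter.Tendsto (fun t => M t / t) (nhdsWithin 0 (Set.Ioi 0)) (nhds 0))
    (hliminf : Filter.Tendsto (fun t => M t / t) Filter.atTop Filter.atTop)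
    (hMderiv : ∀ r > 0, HasDerivAt M (M' r) r)
    (hd : 1 ≤ d) (hdD : d ≤ D)
    (hidx : ∀ r > 0, d * M r / r ≤ M' r ∧ M' r ≤ D * M r / r)
    -- φ ∈ C², φ' < 0, φ'(R) → 0 at ∞
    (hφ : ∀ r > 0, HasDerivAt φ (φ' r) r)
    (hφ2 : ∀ r > 0, HasDerivAt φ' (φ'' r) r)
    (hφ2c : ContinuousOn φ'' (Set.Ioi 0))
    (hφneg : ∀ r > 0, φ' r < 0)
    (hφlim : Filter.Tendsto φ' Filter.atTop (nhds 0))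
    -- ω ≥ 0 of class C¹, with L = sup ω/|φ'| finite
    (hω : ∀ r > 0, 0 ≤ ω r)
    (hωd : ∀ r > 0, HasDerivAt ω (ω' r) r)
    (hL : ∀ r > 0, ω r / |φ' r| ≤ L)
    -- u ∈ W^{1,1}_loc, bounded together with u·e^{-φ} near infinity
    (hu : ∀ r > 0, HasDerivAt u (u' r) r)
    (hub : ∃ C₀ R₀ : ℝ, ∀ R ≥ R₀, |u R| ≤ C₀ ∧ |u R| * Real.exp (-φ R) ≤ C₀) :
    Filter.Tendsto (fun R => M (ω R * |u R|) / φ' R * Real.exp (-φ R))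
      Filter.atTop (nhds 0) ∧
    ∃ s R : ℕ → ℝ, (∀ n, 0 < s n) ∧
      Filter.Tendsto s Filter.atTop (nhds 0) ∧
      Filter.Tendsto R Filter.atTop Filter.atTop ∧
      ∃ l : EReal, 0 ≤ l ∧
        Filter.Tendsto (fun n =>
          ((M (ω (R n) * |u (R n)|) / φ' (R n) * Real.exp (-φ (R n)) -
            M (ω (s n) * |u (s n)|) / φ' (s n) * Real.exp (-φ (s n)) : ℝ) : EReal))
          Filter.atTop (nhds l) := by
  obtain ⟨C₀, R₀, hub⟩ := hub
  set g : ℝ → ℝ := fun R => M (ω R * |u R|) / φ' R * Real.exp (-φ R) with hg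
  -- slopes of M are monotone (convexity through the origin)
  have slope_mono : ∀ s t : ℝ, 0 < s → s < t → M s / s ≤ M t / t := by
    intro s t hs hst
    have ht : 0 < t := hs.trans hst
    have hb0 : (0:ℝ) ≤ s / t := div_nonneg hs.le ht.le
    have hb1 : s / t ≤ 1 := (div_le_one ht).mpr hst.le
    have h1 := hconv.2 (self_mem_Ici) (le_of_lt ht : (t:ℝ) ∈ Set.Ici 0)
      (by linarith : (0:ℝ) ≤ 1 - s / t) hb0 (by ring)
    simp only [smul_eq_mul, mul_zero, zero_add, hM0] at h1
    rw [div_mul_cancel₀ s ht.ne'] at h1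
    rw [div_le_div_iff₀ hs ht]
    calc M s * t ≤ (s / t * M t) * t := by nlinarith
      _ = M t * s := by field_simp
  have hMt_nn : ∀ t : ℝ, 0 < t → 0 ≤ M t / t := by
    intro t ht
    refine le_of_tendsto hlim0 ?_
    filter_upwards [self_mem_nhdsWithin,
      mem_nhdsWithin_of_mem_nhds (Iio_mem_nhds ht)] with s hs1 hs2
    exact slope_mono s t hs1 hs2
  have hMnn : ∀ t : ℝ, 0 ≤ t → 0 ≤ M t := by
    intro t ht
    rcases ht.eq_or_lt with h | h
    · rw [← h, hM0]
    · have h2 := mul_nonneg (hMt_nn t h) h.le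
      rwa [div_mul_cancel₀ _ h.ne'] at h2
  have hC0 : 0 ≤ C₀ := le_trans (abs_nonneg _) (hub R₀ le_rfl).1
  have hL0 : 0 ≤ L := le_trans (div_nonneg (hω 1 one_pos) (abs_nonneg _)) (hL 1 one_pos)
  have hωb : ∀ r : ℝ, 0 < r → ω r ≤ L * |φ' r| := by
    intro r hr
    have habs : 0 < |φ' r| := abs_pos.mpr (hφneg r hr).ne
    exact (div_le_iff₀ habs).mp (hL r hr)
  -- g ≤ 0 on positive reals
  have hgle : ∀ r : ℝ, 0 < r → g r ≤ 0 := by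
    intro r hr
    have h1 : M (ω r * |u r|) / φ' r ≤ 0 :=
      div_nonpos_iff.mpr (Or.inl ⟨hMnn _ (mul_nonneg (hω r hr) (abs_nonneg _)), (hφneg r hr).le⟩)
    exact mul_nonpos_iff.mpr (Or.inr ⟨h1, (Real.exp_pos _).le⟩)
  -- Part 1 : g → 0 at infinity
  have hpart1 : Filter.Tendsto g Filter.atTop (nhds 0) := by
    rw [Metric.tendsto_atTop]
    intro ε hε
    have hden : (0:ℝ) < L * C₀ + 1 := by positivity
    set ε' : ℝ := ε / (L * C₀ + 1) with hε'def
    have hε' : 0 < ε' := div_pos hε hden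
    obtain ⟨δ, hδpos, hδ⟩ := Metric.tendsto_nhdsWithin_nhds.mp hlim0 ε' hε'
    have h1 : ∀ᶠ R in Filter.atTop, |φ' R| < δ / (L * C₀ + 1) := by
      have h2 := Metric.tendsto_nhds.mp hφlim (δ / (L * C₀ + 1)) (by positivity)
      filter_upwards [h2] with R hR
      rwa [Real.dist_eq, sub_zero] at hR
    have hkey : L * C₀ * (δ / (L * C₀ + 1)) < δ := by
      rw [mul_div_assoc', div_lt_iff₀ hden]
      nlinarith
    rw [Filter.eventually_atTop] at h1
    obtain ⟨N₁, hN₁⟩ := h1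
    refine ⟨max (max N₁ R₀) 1, fun R hR => ?_⟩
    have hRN₁ : N₁ ≤ R := le_trans (le_max_left _ _) (le_trans (le_max_left _ _) hR)
    have hRR₀ : R₀ ≤ R := le_trans (le_max_right _ _) (le_trans (le_max_left _ _) hR)
    have hRpos : (0:ℝ) < R := lt_of_lt_of_le one_pos (le_trans (le_max_right _ _) hR)
    set t : ℝ := ω R * |u R| with htdef
    have ht0 : 0 ≤ t := mul_nonneg (hω R hRpos) (abs_nonneg _)
    have habs : 0 < |φ' R| := abs_pos.mpr (hφneg R hRpos).ne
    have htb : t ≤ L * C₀ * |φ' R| := by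
      have h3 : ω R * |u R| ≤ (L * |φ' R|) * C₀ :=
        mul_le_mul (hωb R hRpos) (hub R hRR₀).1 (abs_nonneg _)
          (mul_nonneg hL0 (abs_nonneg _))
      calc t = ω R * |u R| := rfl
        _ ≤ (L * |φ' R|) * C₀ := h3
        _ = L * C₀ * |φ' R| := by ring
    have htδ : t < δ := by
      refine lt_of_le_of_lt htb (lt_of_le_of_lt ?_ hkey)
      exact mul_le_mul_of_nonneg_left (hN₁ R hRN₁).le (mul_nonneg hL0 hC0)
    rw [Real.dist_eq, sub_zero]
    rcases ht0.eq_or_lt with h | hpos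
    · have : g R = 0 := by
        simp only [hg, ← htdef, ← h, hM0, zero_div, zero_mul]
      rw [this, abs_zero]; exact hε
    · have hA' : M t / t < ε' := by
        have := hδ (Set.mem_Ioi.mpr hpos) (by rwa [Real.dist_eq, sub_zero, abs_of_pos hpos])
        rw [Real.dist_eq, sub_zero] at this
        exact lt_of_le_of_lt (le_abs_self _) this
      have hA : 0 ≤ M t / t := hMt_nn t hpos
      have hB : t / |φ' R| * Real.exp (-φ R) ≤ L * C₀ := by
        have h4 : t / |φ' R| = (ω R / |φ' R|) * |u R| := by
          rw [htdef, mul_div_right_comm]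
        rw [h4, mul_assoc]
        exact mul_le_mul (hL R hRpos)
          (hub R hRR₀).2 (mul_nonneg (abs_nonneg _) (Real.exp_pos _).le)
          hL0
      have hB0 : 0 ≤ t / |φ' R| * Real.exp (-φ R) :=
        mul_nonneg (div_nonneg ht0 (abs_nonneg _)) (Real.exp_pos _).le
      have hgabs : |g R| = M t / t * (t / |φ' R| * Real.exp (-φ R)) := by
        rw [hg]
        simp only [← htdef]
        rw [abs_mul, abs_div, abs_of_nonneg (hMnn t ht0),
          abs_of_nonneg (Real.exp_pos _).le]
        rw [← mul_assoc, div_mul_div_cancel₀ hpos.ne']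
      rw [hgabs]
      have hεeq : ε' * (L * C₀ + 1) = ε := div_mul_cancel₀ _ hden.ne'
      nlinarith [mul_le_mul_of_nonneg_left hB hA,
        mul_le_mul_of_nonneg_right hA'.le (mul_nonneg hL0 hC0)]
  refine ⟨hpart1, ?_⟩
  -- Part 2 : membership in the class R⁺
  set b : ℕ → ℝ := fun n => g (1 / ((n : ℝ) + 1)) with hb
  have hbpos : ∀ n : ℕ, (0:ℝ) < 1 / ((n : ℝ) + 1) := by
    intro n; positivity
  have hble : ∀ n, b n ≤ 0 := fun n => hgle _ (hbpos n)
  obtain ⟨m, -, θ, hθmono, hθtend⟩ :=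
    isCompact_univ.tendsto_subseq (x := fun n => (b n : EReal)) (fun n => Set.mem_univ _)
  have hθtend' : Filter.Tendsto (fun k => ((b (θ k) : ℝ) : EReal)) Filter.atTop (nhds m) := by
    exact hθtend
  have hmle : m ≤ 0 := by
    refine le_of_tendsto hθtend' (Filter.Eventually.of_forall fun k => ?_)
    exact_mod_cast (hble (θ k))
  -- the sequences
  refine ⟨fun n => 1 / ((θ n : ℝ) + 1), fun n => (n : ℝ), fun n => hbpos (θ n), ?_, ?_, ?_⟩
  · exact tendsto_one_div_add_atTop_nhds_zero_nat.comp hθmono.tendsto_atTop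
  · exact tendsto_natCast_atTop_atTop
  · have hgR : Filter.Tendsto (fun n : ℕ => g (n : ℝ)) Filter.atTop (nhds 0) :=
      hpart1.comp tendsto_natCast_atTop_atTop
    induction m with
    | bot =>
      refine ⟨⊤, le_top, ?_⟩
      show Filter.Tendsto (fun n : ℕ => ((g ((n:ℝ)) - b (θ n) : ℝ) : EReal))
        Filter.atTop (nhds ⊤)
      have hbot : Filter.Tendsto (fun k => b (θ k)) Filter.atTop Filter.atBot := by
        rw [Filter.tendsto_atBot]
        intro x
        have := EReal.tendsto_nhds_bot_iff_real.mp hθtend' (x - 1)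
        filter_upwards [this] with k hk
        have : b (θ k) < x - 1 := by exact_mod_cast hk
        linarith
      have hsum : Filter.Tendsto (fun k : ℕ => g ((k:ℝ)) - b (θ k)) Filter.atTop Filter.atTop := by
        have hneg : Filter.Tendsto (fun k => -b (θ k)) Filter.atTop Filter.atTop :=
          Filter.tendsto_neg_atTop_iff.mpr hbot
        have := hgR.add_atTop hneg
        simpa [sub_eq_add_neg] using this
      rw [EReal.tendsto_nhds_top_iff_real]
      intro x
      filter_upwards [hsum.eventually_ge_atTop (x + 1)] with k hk
      have hx : (x:ℝ) < g ((k:ℝ)) - b (θ k) := by linarith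
      exact_mod_cast hx
    | coe c =>
      have hc : c ≤ 0 := by exact_mod_cast hmle
      refine ⟨((-c : ℝ) : EReal), by exact_mod_cast neg_nonneg.mpr hc, ?_⟩
      show Filter.Tendsto (fun n : ℕ => ((g ((n:ℝ)) - b (θ n) : ℝ) : EReal))
        Filter.atTop (nhds _)
      have hreal : Filter.Tendsto (fun k => b (θ k)) Filter.atTop (nhds c) :=
        EReal.tendsto_coe.mp hθtend'
      have : Filter.Tendsto (fun k : ℕ => g ((k:ℝ)) - b (θ k)) Filter.atTop (nhds (0 - c)) :=
        hgR.sub hreal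
      rw [zero_sub] at this
      exact EReal.tendsto_coe.mpr this
    | top => simp at hmle
end

section
/- Let M be a differentiable N-function with d·M(r)/r ≤ M'(r) ≤ D·M(r)/r for all r > 0 (1 ≤ d ≤ D), and let φ ∈ C²(ℝ₊) with φ' never vanishing. With ω = |φ'|, the quantity b₁(r) = 1 + φ''(r)/φ'(r)² − (ω'(r)/(ω(r)φ'(r)))·[d·χ_G(r) + D·χ_F(r)] equals 1 + (1−d)·φ''(r)/φ'(r)² when φ''(r) ≤ 0, and equals 1 + (1−D)·φ''(r)/φ'(r)² when φ''(r) ≥ 0. Consequently inf_{r>0} b₁(r) > 0 if and only if sup_{r>0} φ''(r)/φ'(r)² < 1/(D−1). -/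
open Real MeasureTheory Filter Set

/-- Indicator of the set F = {r : ω(r) ≠ 0, ω'(r)φ'(r) > 0}, specialized to ω = |φ'|,
so that ω'(r) = sign(φ'(r))·φ''(r). -/
noncomputable def chiF (φ' φ'' : ℝ → ℝ) : ℝ → ℝ :=
  Set.indicator {x | |φ' x| ≠ 0 ∧ 0 < (Real.sign (φ' x) * φ'' x) * φ' x} (fun _ => 1)

/-- Indicator of the set G = {r : ω(r) ≠ 0, ω'(r)φ'(r) < 0}, specialized to ω = |φ'|. -/
noncomputable def chiG (φ' φ'' : ℝ → ℝ) : ℝ → ℝ :=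
  Set.indicator {x | |φ' x| ≠ 0 ∧ (Real.sign (φ' x) * φ'' x) * φ' x < 0} (fun _ => 1)

/-- The quantity b₁(r) for ω = |φ'|. -/
noncomputable def bOne (φ' φ'' : ℝ → ℝ) (d D : ℝ) (r : ℝ) : ℝ :=
  1 + φ'' r / (φ' r) ^ 2 -
    (Real.sign (φ' r) * φ'' r) / (|φ' r| * φ' r) *
      (d * chiG φ' φ'' r + D * chiF φ' φ'' r)

lemma bOne_key (φ' φ'' : ℝ → ℝ) (d D : ℝ) (r : ℝ) (ha : φ' r ≠ 0) :
    (φ'' r ≤ 0 → bOne φ' φ'' d D r = 1 + (1 - d) * (φ'' r / (φ' r) ^ 2)) ∧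
    (0 ≤ φ'' r → bOne φ' φ'' d D r = 1 + (1 - D) * (φ'' r / (φ' r) ^ 2)) := by
  have habs : |φ' r| ≠ 0 := abs_ne_zero.mpr ha
  have hapos : 0 < |φ' r| := abs_pos.mpr ha
  have hs : Real.sign (φ' r) * φ' r = |φ' r| := by
    rcases ha.lt_or_gt with h | h
    · rw [Real.sign_of_neg h, abs_of_neg h]; ring
    · rw [Real.sign_of_pos h, abs_of_pos h]; ring
  have hcond : ∀ b : ℝ, (Real.sign (φ' r) * b) * φ' r = b * |φ' r| := by
    intro b; rw [← hs]; ring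
  have hmemF : r ∈ {x | |φ' x| ≠ 0 ∧ 0 < (Real.sign (φ' x) * φ'' x) * φ' x} ↔ 0 < φ'' r := by
    simp only [Set.mem_setOf_eq, hcond]
    constructor
    · rintro ⟨-, h⟩; nlinarith
    · intro h; exact ⟨habs, by nlinarith⟩
  have hmemG : r ∈ {x | |φ' x| ≠ 0 ∧ (Real.sign (φ' x) * φ'' x) * φ' x < 0} ↔ φ'' r < 0 := by
    simp only [Set.mem_setOf_eq, hcond]
    constructor
    · rintro ⟨-, h⟩; nlinarith
    · intro h; exact ⟨habs, by nlinarith⟩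
  have hsd : (Real.sign (φ' r) * φ'' r) / (|φ' r| * φ' r) = φ'' r / (φ' r) ^ 2 := by
    rcases ha.lt_or_gt with h | h
    · rw [Real.sign_of_neg h, abs_of_neg h]; rw [div_eq_div_iff (by nlinarith) (by positivity)]; ring
    · rw [Real.sign_of_pos h, abs_of_pos h]; rw [div_eq_div_iff (by nlinarith) (by positivity)]; ring
  constructor
  · intro hb
    rcases eq_or_lt_of_le hb with h0 | hneg
    · have hF : chiF φ' φ'' r = 0 :=
        Set.indicator_of_notMem (fun hm => absurd (hmemF.mp hm) (not_lt.mpr hb)) _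
      have hG : chiG φ' φ'' r = 0 :=
        Set.indicator_of_notMem (fun hm => absurd (hmemG.mp hm) (by rw [h0]; exact lt_irrefl 0)) _
      rw [bOne, hF, hG, hsd, h0]; ring
    · have hF : chiF φ' φ'' r = 0 :=
        Set.indicator_of_notMem (fun hm => absurd (hmemF.mp hm) (not_lt.mpr hb)) _
      have hG : chiG φ' φ'' r = 1 := Set.indicator_of_mem (hmemG.mpr hneg) _
      rw [bOne, hF, hG, hsd]; ring
  · intro hb
    rcases eq_or_lt_of_le hb with h0 | hpos
    · have hF : chiF φ' φ'' r = 0 :=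
        Set.indicator_of_notMem (fun hm => absurd (hmemF.mp hm) (by rw [← h0]; exact lt_irrefl 0)) _
      have hG : chiG φ' φ'' r = 0 :=
        Set.indicator_of_notMem (fun hm => absurd (hmemG.mp hm) (not_lt.mpr hb)) _
      rw [bOne, hF, hG, hsd, ← h0]; ring
    · have hF : chiF φ' φ'' r = 1 := Set.indicator_of_mem (hmemF.mpr hpos) _
      have hG : chiG φ' φ'' r = 0 :=
        Set.indicator_of_notMem (fun hm => absurd (hmemG.mp hm) (not_lt.mpr hb)) _
      rw [bOne, hF, hG, hsd]; ring

theorem bOne_special_weight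
    (M M' : ℝ → ℝ) (d D : ℝ) (φ φ' φ'' : ℝ → ℝ)
    (hconv : ConvexOn ℝ (Set.Ici 0) M)
    (hcont : ContinuousOn M (Set.Ici 0))
    (hM0 : M 0 = 0)
    (hlim0 : Filter.Tendsto (fun t => M t / t) (nhdsWithin 0 (Set.Ioi 0)) (nhds 0))
    (hliminf : Filter.Tendsto (fun t => M t / t) Filter.atTop Filter.atTop)
    (hMderiv : ∀ r > 0, HasDerivAt M (M' r) r)
    (hd : 1 ≤ d) (hdD : d ≤ D) (hD : 1 < D)
    (hidx : ∀ r > 0, d * M r / r ≤ M' r ∧ M' r ≤ D * M r / r)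
    (hφ : ∀ r > 0, HasDerivAt φ (φ' r) r)
    (hφ2 : ∀ r > 0, HasDerivAt φ' (φ'' r) r)
    (hφne : ∀ r > 0, φ' r ≠ 0) :
    (∀ r > (0 : ℝ),
      (φ'' r ≤ 0 → bOne φ' φ'' d D r = 1 + (1 - d) * (φ'' r / (φ' r) ^ 2)) ∧
      (0 ≤ φ'' r → bOne φ' φ'' d D r = 1 + (1 - D) * (φ'' r / (φ' r) ^ 2))) ∧
    ((∃ ε > 0, ∀ r > (0 : ℝ), ε ≤ bOne φ' φ'' d D r) ↔
      ∃ c : ℝ, c < 1 / (D - 1) ∧ ∀ r > (0 : ℝ), φ'' r / (φ' r) ^ 2 ≤ c) := by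
  have hD1 : (0:ℝ) < D - 1 := by linarith
  constructor
  · intro r hr; exact bOne_key φ' φ'' d D r (hφne r hr)
  · constructor
    · rintro ⟨ε, hε, hle⟩
      set ε' := min ε 1 with hε'
      have hε'pos : 0 < ε' := lt_min hε one_pos
      have hε'le1 : ε' ≤ 1 := min_le_right _ _
      refine ⟨(1 - ε') / (D - 1), (div_lt_div_iff_of_pos_right hD1).mpr (by linarith), ?_⟩
      intro r hr
      have ha := hφne r hr
      have hsq : 0 < (φ' r) ^ 2 := by positivity
      rcases le_total (φ'' r) 0 with hb | hb
      · have hq : φ'' r / (φ' r) ^ 2 ≤ 0 := div_nonpos_iff.mpr (Or.inr ⟨hb, hsq.le⟩)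
        have : 0 ≤ (1 - ε') / (D - 1) := div_nonneg (by linarith) (le_of_lt hD1)
        linarith
      · have heq := (bOne_key φ' φ'' d D r ha).2 hb
        have hge := hle r hr
        rw [heq] at hge
        have hεε : ε' ≤ ε := min_le_left _ _
        rw [le_div_iff₀ hD1]
        nlinarith
    · rintro ⟨c, hc, hq⟩
      have hcD : (D - 1) * c < 1 := by
        have := (lt_div_iff₀ hD1).mp hc; linarith
      refine ⟨min 1 (1 - (D - 1) * c), lt_min one_pos (by linarith), ?_⟩
      intro r hr
      have ha := hφne r hr
      have hsq : 0 < (φ' r) ^ 2 := by positivity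
      rcases le_total (φ'' r) 0 with hb | hb
      · have heq := (bOne_key φ' φ'' d D r ha).1 hb
        have hqn : φ'' r / (φ' r) ^ 2 ≤ 0 := div_nonpos_iff.mpr (Or.inr ⟨hb, hsq.le⟩)
        have h1 : 0 ≤ (1 - d) * (φ'' r / (φ' r) ^ 2) := by nlinarith
        have : min 1 (1 - (D - 1) * c) ≤ 1 := min_le_left _ _
        rw [heq]; linarith
      · have heq := (bOne_key φ' φ'' d D r ha).2 hb
        have hqc := hq r hr
        have : min 1 (1 - (D - 1) * c) ≤ 1 - (D - 1) * c := min_le_right _ _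
        rw [heq]; nlinarith
end

section
/- Let M be a differentiable N-function satisfying d·M(r)/r ≤ M'(r) ≤ D·M(r)/r (1 ≤ d ≤ D) and let μ(dr) = e^{−φ(r)}dr with φ measurable. Define f_φ(r) = c^{−1}(e^{−φ(r)}) where c(λ) = max(λ^d, λ^D). Then for any measurable g:(0,r)→ℝ, the Luxemburg norm satisfies ‖g·f_φ‖_{L^M(0,r)} ≤ ‖g‖_{L^M_μ(0,r)}, where the left norm is with respect to Lebesgue measure and the right with respect to μ. -/
open Real MeasureTheory Filter Set ENNReal

private lemma scale_bound_aux (M : ℝ → ℝ) (e : ℝ)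
    {s u : ℝ} (hs : 0 < s) (hu : 0 < u)
    (key : M u * u ^ (-e) ≤ M s * s ^ (-e)) :
    M u ≤ (u / s) ^ e * M s := by
  have hpow : (0:ℝ) < u ^ e := Real.rpow_pos_of_pos hu e
  have h2 : M u * u ^ (-e) * u ^ e ≤ M s * s ^ (-e) * u ^ e :=
    mul_le_mul_of_nonneg_right key hpow.le
  rw [mul_assoc, ← Real.rpow_add hu, neg_add_cancel, Real.rpow_zero, mul_one] at h2
  calc M u ≤ M s * s ^ (-e) * u ^ e := h2
    _ = (u / s) ^ e * M s := by
        rw [Real.div_rpow hu.le hs.le, Real.rpow_neg hs.le]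
        field_simp

private lemma anti_aux (M M' : ℝ → ℝ) (e : ℝ)
    (hcont : ContinuousOn M (Set.Ici 0))
    (hMderiv : ∀ t > 0, HasDerivAt M (M' t) t)
    (hub : ∀ t > 0, M' t * t ≤ e * M t) :
    AntitoneOn (fun t => M t * t ^ (-e)) (Set.Ioi (0:ℝ)) := by
  apply antitoneOn_of_hasDerivWithinAt_nonpos (f' := fun t => t ^ (-e - 1) * (M' t * t - e * M t))
    (convex_Ioi 0)
  · exact (hcont.mono (fun x hx => le_of_lt hx)).mul
      (fun x hx => (Real.continuousAt_rpow_const x _ (Or.inl (ne_of_gt hx))).continuousWithinAt)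
  · intro t ht
    rw [interior_Ioi] at ht ⊢
    have ht' : (0:ℝ) < t := ht
    have h1 : HasDerivAt (fun t : ℝ => M t * t ^ (-e))
        (M' t * t ^ (-e) + M t * (-e * t ^ (-e - 1))) t :=
      (hMderiv t ht').mul (Real.hasDerivAt_rpow_const (Or.inl (ne_of_gt ht')))
    have heq : M' t * t ^ (-e) + M t * (-e * t ^ (-e - 1))
        = t ^ (-e - 1) * (M' t * t - e * M t) := by
      have h3 : t ^ (-e) = t ^ (-e - 1) * t := by
        rw [← Real.rpow_add_one (ne_of_gt ht')]; ring_nf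
      rw [h3]; ring
    exact (heq ▸ h1).hasDerivWithinAt
  · intro t ht
    rw [interior_Ioi] at ht
    exact mul_nonpos_of_nonneg_of_nonpos (Real.rpow_nonneg (le_of_lt ht) _)
      (sub_nonpos.mpr (hub t ht))

private lemma mono_aux (M M' : ℝ → ℝ) (e : ℝ)
    (hcont : ContinuousOn M (Set.Ici 0))
    (hMderiv : ∀ t > 0, HasDerivAt M (M' t) t)
    (hlb : ∀ t > 0, e * M t ≤ M' t * t) :
    MonotoneOn (fun t => M t * t ^ (-e)) (Set.Ioi (0:ℝ)) := by
  apply monotoneOn_of_hasDerivWithinAt_nonneg (f' := fun t => t ^ (-e - 1) * (M' t * t - e * M t))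
    (convex_Ioi 0)
  · exact (hcont.mono (fun x hx => le_of_lt hx)).mul
      (fun x hx => (Real.continuousAt_rpow_const x _ (Or.inl (ne_of_gt hx))).continuousWithinAt)
  · intro t ht
    rw [interior_Ioi] at ht ⊢
    have ht' : (0:ℝ) < t := ht
    have h1 : HasDerivAt (fun t : ℝ => M t * t ^ (-e))
        (M' t * t ^ (-e) + M t * (-e * t ^ (-e - 1))) t :=
      (hMderiv t ht').mul (Real.hasDerivAt_rpow_const (Or.inl (ne_of_gt ht')))
    have heq : M' t * t ^ (-e) + M t * (-e * t ^ (-e - 1))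
        = t ^ (-e - 1) * (M' t * t - e * M t) := by
      have h3 : t ^ (-e) = t ^ (-e - 1) * t := by
        rw [← Real.rpow_add_one (ne_of_gt ht')]; ring_nf
      rw [h3]; ring
    exact (heq ▸ h1).hasDerivWithinAt
  · intro t ht
    rw [interior_Ioi] at ht
    exact mul_nonneg (Real.rpow_nonneg (le_of_lt ht) _)
      (sub_nonneg.mpr (hlb t ht))

/-- Key scaling inequality: `M (lam * s) ≤ max (lam^d) (lam^D) * M s`. -/
private lemma scale_bound (M M' : ℝ → ℝ) (d D : ℝ)
    (hcont : ContinuousOn M (Set.Ici 0))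
    (hMderiv : ∀ t > 0, HasDerivAt M (M' t) t)
    (hidx : ∀ t > 0, d * M t / t ≤ M' t ∧ M' t ≤ D * M t / t)
    {s lam : ℝ} (hs : 0 < s) (hlam : 0 < lam) (hMs : 0 ≤ M s) :
    M (lam * s) ≤ max (lam ^ d) (lam ^ D) * M s := by
  have hls : 0 < lam * s := by positivity
  have hq : lam * s / s = lam := by field_simp
  rcases le_total 1 lam with h1 | h1
  · have hub : ∀ t > 0, M' t * t ≤ D * M t := by
      intro t ht
      have := (hidx t ht).2
      calc M' t * t ≤ (D * M t / t) * t := mul_le_mul_of_nonneg_right this ht.le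
        _ = D * M t := by field_simp
    have := scale_bound_aux M D hs hls
      ((anti_aux M M' D hcont hMderiv hub) (Set.mem_Ioi.mpr hs) (Set.mem_Ioi.mpr hls)
        (le_mul_of_one_le_left hs.le h1))
    rw [hq] at this
    exact this.trans (mul_le_mul_of_nonneg_right (le_max_right _ _) hMs)
  · have hlb : ∀ t > 0, d * M t ≤ M' t * t := by
      intro t ht
      have := (hidx t ht).1
      calc d * M t = (d * M t / t) * t := by field_simp
        _ ≤ M' t * t := mul_le_mul_of_nonneg_right this ht.le
    have := scale_bound_aux M d hs hls
      ((mono_aux M M' d hcont hMderiv hlb) (Set.mem_Ioi.mpr hls) (Set.mem_Ioi.mpr hs)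
        (mul_le_of_le_one_left hs.le h1))
    rw [hq] at this
    exact this.trans (mul_le_mul_of_nonneg_right (le_max_left _ _) hMs)

private lemma M_nonneg (M : ℝ → ℝ)
    (hconv : ConvexOn ℝ (Set.Ici 0) M) (hM0 : M 0 = 0)
    (hlim0 : Filter.Tendsto (fun t => M t / t) (nhdsWithin 0 (Set.Ioi 0)) (nhds 0))
    {t : ℝ} (ht : 0 ≤ t) : 0 ≤ M t := by
  rcases ht.eq_or_lt with h | h
  · simp [← h, hM0]
  have hslope : ∀ u ∈ Set.Ioo (0:ℝ) t, M u / u ≤ M t / t := by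
    intro u hu
    have hut : u / t ≤ 1 := (div_le_one h).mpr hu.2.le
    have hut0 : (0:ℝ) ≤ u / t := div_nonneg hu.1.le h.le
    have hcomb := hconv.2 (Set.mem_Ici.mpr le_rfl) (Set.mem_Ici.mpr h.le)
      (sub_nonneg.mpr hut) hut0 (by ring)
    have harg : (1 - u / t) • (0:ℝ) + (u / t) • t = u := by
      simp [smul_eq_mul]; field_simp
    rw [harg, hM0, smul_zero, zero_add, smul_eq_mul] at hcomb
    have hMu : M u / u ≤ (u / t * M t) / u := (div_le_div_iff_of_pos_right hu.1).mpr hcomb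
    calc M u / u ≤ (u / t * M t) / u := hMu
      _ = M t / t := by
          field_simp [ne_of_gt hu.1, ne_of_gt h]
  have hev : ∀ᶠ u in nhdsWithin 0 (Set.Ioi 0), M u / u ≤ M t / t := by
    filter_upwards [Ioo_mem_nhdsGT_of_mem (Set.mem_Ico.mpr ⟨le_rfl, h⟩)] with u hu
    exact hslope u hu
  have hle : (0:ℝ) ≤ M t / t := le_of_tendsto hlim0 hev
  have := mul_nonneg hle h.le
  rwa [div_mul_cancel₀ _ (ne_of_gt h)] at this

theorem luxemburg_norm_weight_transfer
    (M M' : ℝ → ℝ) (d D : ℝ) (φ fφ g : ℝ → ℝ) (r : ℝ) (hr : 0 < r)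
    -- M is a differentiable N-function with two-sided index bounds
    (hconv : ConvexOn ℝ (Set.Ici 0) M)
    (hcont : ContinuousOn M (Set.Ici 0))
    (hM0 : M 0 = 0)
    (hlim0 : Filter.Tendsto (fun t => M t / t) (nhdsWithin 0 (Set.Ioi 0)) (nhds 0))
    (hliminf : Filter.Tendsto (fun t => M t / t) Filter.atTop Filter.atTop)
    (hMderiv : ∀ t > 0, HasDerivAt M (M' t) t)
    (hd : 1 ≤ d) (hdD : d ≤ D)
    (hidx : ∀ t > 0, d * M t / t ≤ M' t ∧ M' t ≤ D * M t / t)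
    -- φ measurable, f_φ = c⁻¹(e^{-φ}) where c(λ) = max(λ^d, λ^D)
    (hφm : Measurable φ) (hgm : Measurable g)
    (hfφpos : ∀ x, 0 < fφ x)
    (hfφ : ∀ x, max (fφ x ^ d) (fφ x ^ D) = Real.exp (-φ x))
    -- g belongs to L^M_μ(0,r): the defining set of the Luxemburg norm is nonempty
    (hg : ∃ K : ℝ, 0 < K ∧
      (∫⁻ x in Set.Ioo (0 : ℝ) r, ENNReal.ofReal (M (|g x| / K) * Real.exp (-φ x))) ≤ 1) :
    sInf {K : ℝ | 0 < K ∧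
        (∫⁻ x in Set.Ioo (0 : ℝ) r, ENNReal.ofReal (M (|g x * fφ x| / K))) ≤ 1} ≤
      sInf {K : ℝ | 0 < K ∧
        (∫⁻ x in Set.Ioo (0 : ℝ) r, ENNReal.ofReal (M (|g x| / K) * Real.exp (-φ x))) ≤ 1} := by
  apply csInf_le_csInf
  · exact ⟨0, fun K hK => hK.1.le⟩
  · obtain ⟨K, hK⟩ := hg
    exact ⟨K, hK⟩
  · rintro K ⟨hK, hKint⟩
    refine ⟨hK, le_trans (lintegral_mono fun x => ?_) hKint⟩
    apply ENNReal.ofReal_le_ofReal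
    rcases eq_or_ne (g x) 0 with hgx | hgx
    · have : |g x * fφ x| / K = 0 := by rw [hgx]; simp
      rw [this, hM0]
      exact mul_nonneg (M_nonneg M hconv hM0 hlim0 (by positivity)) (Real.exp_pos _).le
    · have hs : 0 < |g x| / K := div_pos (abs_pos.mpr hgx) hK
      have harg : |g x * fφ x| / K = fφ x * (|g x| / K) := by
        rw [abs_mul, abs_of_pos (hfφpos x)]
        ring
      rw [harg]
      calc M (fφ x * (|g x| / K))
          ≤ max (fφ x ^ d) (fφ x ^ D) * M (|g x| / K) :=
            scale_bound M M' d D hcont hMderiv hidx hs (hfφpos x)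
              (M_nonneg M hconv hM0 hlim0 hs.le)
        _ = M (|g x| / K) * Real.exp (-φ x) := by rw [hfφ x]; ring
end

section
/- Let p > 1, M(λ) = λ^p, φ(x) = −x²/2, ω(x) = x. Then the triple satisfies condition (B1): b₁(r) = 1 + (p−1)/r² > 0 for all r > 0 with inf b₁ = 1, and L = sup_{r>0} ω(r)/|φ'(r)| = 1; however, the Bloom–Kerman quantity G(ε,y) = ∫_y^∞ (εx)^p e^{x²/2} dx is infinite for every ε, y > 0, so the Bloom–Kerman condition fails. -/
open Real MeasureTheory Filter Set ENNReal

theorem gaussian_type_example_B1_holds_BK_fails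
    (p : ℝ) (hp : 1 < p) :
    -- b₁(r) = 1 + φ''/(φ')² − p·ω'/(ωφ')·χ_G computes to 1 + (p−1)/r² > 0
    (∀ r > (0 : ℝ),
      1 + (-1 : ℝ) / (-r) ^ 2 - p * ((1 : ℝ) / (r * (-r))) = 1 + (p - 1) / r ^ 2) ∧
    (∀ r > (0 : ℝ), 0 < 1 + (p - 1) / r ^ 2) ∧
    (sInf {x : ℝ | ∃ r > (0 : ℝ), x = 1 + (p - 1) / r ^ 2} = 1) ∧
    -- L = sup ω/|φ'| = 1
    (∀ r > (0 : ℝ), r / |(-r : ℝ)| = 1) ∧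
    -- the Bloom–Kerman quantity G(ε,y) is infinite
    (∀ ε > (0 : ℝ), ∀ y > (0 : ℝ),
      (∫⁻ x in Set.Ioi y, ENNReal.ofReal ((ε * x) ^ p * Real.exp (x ^ 2 / 2))) = ⊤) := by
  have hp0 : 0 < p - 1 := by linarith
  refine ⟨?_, ?_, ?_, ?_, ?_⟩
  · intro r hr
    have hr0 : r ≠ 0 := ne_of_gt hr
    field_simp
    ring
  · intro r hr
    have : 0 < (p - 1) / r ^ 2 := div_pos hp0 (by positivity)
    linarith
  · have hlb : ∀ x ∈ {x : ℝ | ∃ r > (0 : ℝ), x = 1 + (p - 1) / r ^ 2}, 1 ≤ x := by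
      rintro x ⟨r, hr, rfl⟩
      have : 0 < (p - 1) / r ^ 2 := div_pos hp0 (by positivity)
      linarith
    apply le_antisymm
    · -- sInf ≤ 1: any lower bound is ≤ 1 via sequence r = n+1
      by_contra h
      push_neg at h
      -- sInf S > 1
      have hne : {x : ℝ | ∃ r > (0 : ℝ), x = 1 + (p - 1) / r ^ 2}.Nonempty :=
        ⟨1 + (p - 1) / 1 ^ 2, 1, one_pos, rfl⟩
      have hbdd : BddBelow {x : ℝ | ∃ r > (0 : ℝ), x = 1 + (p - 1) / r ^ 2} := ⟨1, hlb⟩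
      have key : ∀ n : ℕ, sInf {x : ℝ | ∃ r > (0 : ℝ), x = 1 + (p - 1) / r ^ 2}
          ≤ 1 + (p - 1) / ((n : ℝ) + 1) ^ 2 := by
        intro n
        exact csInf_le hbdd ⟨(n : ℝ) + 1, by positivity, rfl⟩
      have hT : Tendsto (fun n : ℕ => 1 + (p - 1) / ((n : ℝ) + 1) ^ 2) atTop (nhds 1) := by
        have hsq : Tendsto (fun n : ℕ => ((n : ℝ) + 1) ^ 2) atTop atTop :=
          (tendsto_pow_atTop (by norm_num : (2 : ℕ) ≠ 0)).comp
            (tendsto_atTop_add_const_right _ 1 tendsto_natCast_atTop_atTop)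
        have : Tendsto (fun n : ℕ => (p - 1) / ((n : ℝ) + 1) ^ 2) atTop (nhds 0) :=
          Tendsto.div_atTop tendsto_const_nhds hsq
        simpa using tendsto_const_nhds.add this
      have := le_of_tendsto_of_tendsto' tendsto_const_nhds hT (fun n => key n)
      linarith
    · exact le_csInf ⟨1 + (p - 1) / 1 ^ 2, 1, one_pos, rfl⟩ hlb
  · intro r hr
    rw [abs_neg, abs_of_pos hr, div_self (ne_of_gt hr)]
  · intro ε hε y hy
    set m : ℝ := max y (1 / ε) with hm
    have hsub : Set.Ioi m ⊆ Set.Ioi y := Set.Ioi_subset_Ioi (le_max_left _ _)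
    have hge : ∀ x ∈ Set.Ioi m, (1 : ℝ≥0∞) ≤ ENNReal.ofReal ((ε * x) ^ p * Real.exp (x ^ 2 / 2)) := by
      intro x hx
      have hx1 : 1 / ε < x := lt_of_le_of_lt (le_max_right _ _) hx
      have hεx : 1 ≤ ε * x := by
        rw [div_lt_iff₀ hε] at hx1
        nlinarith
      have h1 : (1 : ℝ) ≤ (ε * x) ^ p := Real.one_le_rpow hεx (by linarith)
      have h2 : (1 : ℝ) ≤ Real.exp (x ^ 2 / 2) := Real.one_le_exp (by positivity)
      rw [show (1 : ℝ≥0∞) = ENNReal.ofReal 1 from (ENNReal.ofReal_one).symm]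
      exact ENNReal.ofReal_le_ofReal (by nlinarith)
    have h1 : (∫⁻ x in Set.Ioi m, (1 : ℝ≥0∞)) ≤
        ∫⁻ x in Set.Ioi m, ENNReal.ofReal ((ε * x) ^ p * Real.exp (x ^ 2 / 2)) :=
      setLIntegral_mono' measurableSet_Ioi hge
    have h2 : (∫⁻ x in Set.Ioi m, ENNReal.ofReal ((ε * x) ^ p * Real.exp (x ^ 2 / 2))) ≤
        ∫⁻ x in Set.Ioi y, ENNReal.ofReal ((ε * x) ^ p * Real.exp (x ^ 2 / 2)) :=
      lintegral_mono_set hsub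
    have hvol : (∫⁻ x in Set.Ioi m, (1 : ℝ≥0∞)) = ⊤ := by
      rw [setLIntegral_one, Real.volume_Ioi]
    exact top_le_iff.mp (hvol ▸ h1.trans h2)
end

section
/- Let u(r) = ∫₀^r e^{−τ²} dτ (a scaled error function), p > 1, φ(x) = −x²/2, ω(x) = x, M(λ) = λ^p. Then u belongs to the set H of Hardy transforms with ∫₀^∞ M(|u'(x)|)e^{−φ(x)} dx = ∫₀^∞ e^{−px²} e^{x²/2} dx < ∞, but ∫₀^∞ M(ω(x)|u(x)|)e^{−φ(x)} dx = ∫₀^∞ x^p u(x)^p e^{x²/2} dx = ∞; hence the Hardy inequality ∫ M(ω|u|)e^{−φ} ≤ C ∫ M(|u'|)e^{−φ} fails on the full set H for this triple (ω, φ, M). -/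
open Real MeasureTheory Filter Set ENNReal

theorem error_function_counterexample
    (p : ℝ) (hp : 1 < p) :
    -- u(r) = ∫₀^r e^{-τ²} dτ is a Hardy transform: u' = e^{-x²} and u(r) → 0 as r → 0⁺
    (∀ x : ℝ, HasDerivAt (fun r => ∫ τ in (0 : ℝ)..r, Real.exp (-τ ^ 2))
      (Real.exp (-x ^ 2)) x) ∧
    Filter.Tendsto (fun r => ∫ τ in (0 : ℝ)..r, Real.exp (-τ ^ 2))
      (nhdsWithin 0 (Set.Ioi 0)) (nhds 0) ∧
    -- the right-hand side ∫ M(|u'|)e^{-φ} = ∫ e^{-px²}e^{x²/2} is finite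
    ((∫⁻ x in Set.Ioi (0 : ℝ),
        ENNReal.ofReal (Real.exp (-x ^ 2) ^ p * Real.exp (x ^ 2 / 2))) ≠ ⊤) ∧
    -- the left-hand side ∫ M(ω|u|)e^{-φ} = ∫ (x·u(x))^p e^{x²/2} is infinite
    ((∫⁻ x in Set.Ioi (0 : ℝ),
        ENNReal.ofReal ((x * |∫ τ in (0 : ℝ)..x, Real.exp (-τ ^ 2)|) ^ p *
          Real.exp (x ^ 2 / 2))) = ⊤) ∧
    -- hence the Hardy inequality fails for this u, for every constant C
    (∀ C : ℝ,
      ¬ ((∫⁻ x in Set.Ioi (0 : ℝ),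
            ENNReal.ofReal ((x * |∫ τ in (0 : ℝ)..x, Real.exp (-τ ^ 2)|) ^ p *
              Real.exp (x ^ 2 / 2))) ≤
          ENNReal.ofReal C *
            ∫⁻ x in Set.Ioi (0 : ℝ),
              ENNReal.ofReal (Real.exp (-x ^ 2) ^ p * Real.exp (x ^ 2 / 2)))) := by
  have hcont : Continuous fun τ : ℝ => Real.exp (-τ ^ 2) := by continuity
  have hderiv : ∀ x : ℝ, HasDerivAt (fun r => ∫ τ in (0 : ℝ)..r, Real.exp (-τ ^ 2))
      (Real.exp (-x ^ 2)) x := fun x =>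
    intervalIntegral.integral_hasDerivAt_right (hcont.intervalIntegrable _ _)
      (hcont.stronglyMeasurableAtFilter _ _) hcont.continuousAt
  -- part 2
  have htend : Filter.Tendsto (fun r => ∫ τ in (0 : ℝ)..r, Real.exp (-τ ^ 2))
      (nhdsWithin 0 (Set.Ioi 0)) (nhds 0) := by
    have h0 : (∫ τ in (0 : ℝ)..(0:ℝ), Real.exp (-τ ^ 2)) = 0 := by simp
    have := ((hderiv 0).continuousAt).continuousWithinAt (s := Set.Ioi 0)
    simpa [ContinuousWithinAt, h0] using this
  -- part 3
  have hfin : (∫⁻ x in Set.Ioi (0 : ℝ),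
      ENNReal.ofReal (Real.exp (-x ^ 2) ^ p * Real.exp (x ^ 2 / 2))) ≠ ⊤ := by
    have heq : ∀ x : ℝ, Real.exp (-x ^ 2) ^ p * Real.exp (x ^ 2 / 2)
        = Real.exp (-(p - 1/2) * x ^ 2) := by
      intro x
      rw [← Real.exp_mul, ← Real.exp_add]
      ring_nf
    have hint : Integrable (fun x : ℝ => Real.exp (-(p - 1/2) * x ^ 2)) :=
      integrable_exp_neg_mul_sq (by linarith)
    have : (∫⁻ x in Set.Ioi (0 : ℝ),
        ENNReal.ofReal (Real.exp (-x ^ 2) ^ p * Real.exp (x ^ 2 / 2)))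
        = ∫⁻ x in Set.Ioi (0 : ℝ), ENNReal.ofReal (Real.exp (-(p - 1/2) * x ^ 2)) := by
      simp only [heq]
    rw [this]
    exact (hint.restrict.lintegral_lt_top).ne
  -- part 4
  have hu1 : Real.exp (-1) ≤ ∫ τ in (0 : ℝ)..(1:ℝ), Real.exp (-τ ^ 2) := by
    have : (∫ τ in (0 : ℝ)..(1:ℝ), Real.exp (-1 : ℝ)) ≤
        ∫ τ in (0 : ℝ)..(1:ℝ), Real.exp (-τ ^ 2) := by
      apply intervalIntegral.integral_mono_on (by norm_num)
        (intervalIntegrable_const) (hcont.intervalIntegrable _ _)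
      intro τ hτ
      apply Real.exp_le_exp.2
      nlinarith [hτ.1, hτ.2]
    simpa using this
  have humono : ∀ x : ℝ, 1 ≤ x →
      (∫ τ in (0 : ℝ)..(1:ℝ), Real.exp (-τ ^ 2)) ≤ ∫ τ in (0 : ℝ)..x, Real.exp (-τ ^ 2) := by
    intro x hx
    have hsplit : (∫ τ in (0 : ℝ)..(1:ℝ), Real.exp (-τ ^ 2))
        + (∫ τ in (1 : ℝ)..x, Real.exp (-τ ^ 2)) = ∫ τ in (0 : ℝ)..x, Real.exp (-τ ^ 2) :=
      intervalIntegral.integral_add_adjacent_intervals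
        (hcont.intervalIntegrable _ _) (hcont.intervalIntegrable _ _)
    have hnn : 0 ≤ ∫ τ in (1 : ℝ)..x, Real.exp (-τ ^ 2) :=
      intervalIntegral.integral_nonneg hx (fun τ _ => (Real.exp_pos _).le)
    linarith
  have htop : (∫⁻ x in Set.Ioi (0 : ℝ),
      ENNReal.ofReal ((x * |∫ τ in (0 : ℝ)..x, Real.exp (-τ ^ 2)|) ^ p *
        Real.exp (x ^ 2 / 2))) = ⊤ := by
    set k : ℝ := Real.exp (-1) ^ p with hk
    have hkpos : 0 < k := Real.rpow_pos_of_pos (Real.exp_pos _) p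
    refine top_le_iff.mp ?_
    calc (⊤ : ℝ≥0∞) = ∫⁻ _ in Set.Ioi (1 : ℝ), ENNReal.ofReal k := by
          rw [setLIntegral_const, Real.volume_Ioi, ENNReal.mul_top]
          · simp [ENNReal.ofReal_pos.2 hkpos, (ENNReal.ofReal_pos.2 hkpos).ne']
      _ ≤ ∫⁻ x in Set.Ioi (1 : ℝ),
            ENNReal.ofReal ((x * |∫ τ in (0 : ℝ)..x, Real.exp (-τ ^ 2)|) ^ p *
              Real.exp (x ^ 2 / 2)) := by
          refine setLIntegral_mono' measurableSet_Ioi ?_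
          intro x hx
          have hx1 : (1:ℝ) ≤ x := le_of_lt hx
          apply ENNReal.ofReal_le_ofReal
          have hux : Real.exp (-1) ≤ |∫ τ in (0 : ℝ)..x, Real.exp (-τ ^ 2)| :=
            le_trans (hu1.trans (humono x hx1)) (le_abs_self _)
          have hbase : Real.exp (-1) ≤ x * |∫ τ in (0 : ℝ)..x, Real.exp (-τ ^ 2)| := by
            nlinarith [Real.exp_pos (-1:ℝ), abs_nonneg (∫ τ in (0 : ℝ)..x, Real.exp (-τ ^ 2))]
          have h1 : k ≤ (x * |∫ τ in (0 : ℝ)..x, Real.exp (-τ ^ 2)|) ^ p :=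
            Real.rpow_le_rpow (Real.exp_pos _).le hbase (by linarith)
          have h2 : (1:ℝ) ≤ Real.exp (x ^ 2 / 2) := Real.one_le_exp (by positivity)
          nlinarith [hkpos]
      _ ≤ ∫⁻ x in Set.Ioi (0 : ℝ),
            ENNReal.ofReal ((x * |∫ τ in (0 : ℝ)..x, Real.exp (-τ ^ 2)|) ^ p *
              Real.exp (x ^ 2 / 2)) :=
          lintegral_mono_set (Set.Ioi_subset_Ioi (by norm_num))
  refine ⟨hderiv, htend, hfin, htop, fun C hC => ?_⟩
  rw [htop, top_le_iff] at hC
  exact (ENNReal.mul_ne_top ENNReal.ofReal_ne_top hfin) hC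
end
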